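/- Let Ω ⊂ ℝ^d (d ≥ 3) be a convex compact domain with smooth boundary of finite type and let Ω_j ⊂ ℝ^{d−1} (1 ≤ j ≤ d) be the intersection of Ω with the coordinate hyperplane x_j = 0. If (ã_1,…,ã_{d−2}) and (𝔞_1,…,𝔞_{d−1}) are the multitypes of ∂Ω_j and of ∂Ω at a common point P ∈ ∂Ω_j ⊂ ∂Ω respectively, then for every 1 ≤ i ≤ d − 2 one has ã_i ≤ 𝔞_{i+1}. -/

import Mathlib

/-!
A tangent direction `u` at `P` lies in `S_P^m` exactly when `Φ(t u) = o(t^m)` (Taylor), and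
this can be read off from any curve `P + t u + o(t^m)` on the boundary, since `Φ` is Lipschitz
near `0`. The flat boundary curves `P' + t x - Φ'(t x) n'` of `Ω_j` are such curves in `∂Ω`, so
the coordinate embedding `ℝ^{d-1} → ℝ^d` maps `S_P^m(Ω_j)` into `S_P^m(Ω)` and
`dim S_P^m(Ω_j) ≤ dim S_P^m(Ω)`. If `ã_i > 𝔞_{i+1} = m`, the monotonicity of the multitypes
gives `dim S_P^m(Ω_j) ≥ d - 1 - i` and `dim S_P^m(Ω) ≤ d - 2 - i`, a contradiction.
-/

open MeasureTheory Finset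
open scoped BigOperators RealInnerProductSpace Classical

noncomputable section

namespace Paper

/-- `ℝ^d` with the Euclidean structure. -/
abbrev E (d : ℕ) := EuclideanSpace ℝ (Fin d)

/-- The integer vector `k` viewed as a point of `ℝ^d`. -/
def intVec {d : ℕ} (k : Fin d → ℤ) : E d := WithLp.toLp 2 (fun i => (k i : ℝ))

/-- `#(ℕ^d ∩ S)`, the number of positive integer lattice points in `S`. -/
def countPos {d : ℕ} (S : Set (E d)) : ℕ :=
  {k : Fin d → ℤ | (∀ i, 1 ≤ k i) ∧ intVec k ∈ S}.ncard

/-- `#(ℤ₊^d ∩ S)`, the number of nonnegative integer lattice points in `S`. -/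
def countNonneg {d : ℕ} (S : Set (E d)) : ℕ :=
  {k : Fin d → ℤ | (∀ i, 0 ≤ k i) ∧ intVec k ∈ S}.ncard

/-- `#(ℤ^d ∩ S)`, the number of integer lattice points in `S`. -/
def countZ {d : ℕ} (S : Set (E d)) : ℕ :=
  {k : Fin d → ℤ | intVec k ∈ S}.ncard

/-- `tAS = {(t a₁ x₁, …, t a_d x_d) : x ∈ S}` for `A = diag(a₁,…,a_d)`. -/
def stretch {d : ℕ} (t : ℝ) (a : Fin d → ℝ) (S : Set (E d)) : Set (E d) :=
  {y | ∃ x ∈ S, ∀ i, y i = t * a i * x i}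

/-- `A = diag(a₁,…,a_d)` is positive definite with determinant 1. -/
def IsDiag {d : ℕ} (a : Fin d → ℝ) : Prop := (∀ i, 0 < a i) ∧ ∏ i, a i = 1

/-- `a_* = ‖A⁻¹‖_∞ = max aᵢ⁻¹`. -/
def aStar {d : ℕ} (a : Fin d → ℝ) : ℝ := ⨆ i, (a i)⁻¹

/-- symmetry with respect to each coordinate hyperplane. -/
def SymmetricCoords {d : ℕ} (Ω : Set (E d)) : Prop :=
  ∀ (j : Fin d) (x : E d), x ∈ Ω → WithLp.toLp 2 (fun i => if i = j then -x i else x i) ∈ Ω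

/-- `Ω_j = Ω ∩ {x_j = 0}` as a subset of `ℝ^d`. -/
def slice {d : ℕ} (Ω : Set (E d)) (j : Fin d) : Set (E d) := {x ∈ Ω | x j = 0}

/-- `|Ω_j|`: the `(d-1)`-dimensional Lebesgue measure of `Ω ∩ {x_j = 0}`,
computed in the Euclidean space with coordinates indexed by `i ≠ j`. -/
def sliceVol {d : ℕ} (Ω : Set (E d)) (j : Fin d) : ℝ :=
  (volume {y : EuclideanSpace ℝ {i : Fin d // i ≠ j} |
      (show E d from WithLp.toLp 2 (fun i => if h : i = j then 0 else y ⟨i, h⟩)) ∈ Ω}).toReal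

/-- A local chart for `∂Ω` at `P`: a unit outward normal `n`, and a `C^k` convex-graph
parametrization `Γ(V) = P + V - Φ(V) n` of the boundary over the tangent plane. -/
structure BoundaryChart {d : ℕ} (k : ℕ∞) (Ω : Set (E d)) (P : E d) where
  n : E d
  norm_n : ‖n‖ = 1
  outer : ∀ x ∈ Ω, ⟪x, n⟫ ≤ ⟪P, n⟫
  Φ : E d → ℝ
  smooth : ContDiff ℝ k Φ
  Φ0 : Φ 0 = 0
  dΦ0 : fderiv ℝ Φ 0 = 0
  ε : ℝ
  εpos : 0 < ε
  graph : ∀ V ∈ (Submodule.span ℝ {n})ᗮ, ‖V‖ < ε → P + V - Φ V • n ∈ frontier Ω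
  graph' : ∀ x ∈ frontier Ω, ‖x - P‖ < ε →
    ∃ V ∈ (Submodule.span ℝ {n})ᗮ, x = P + V - Φ V • n

/-- `D_x^j Φ(0)`: the `j`-th derivative of `Φ` at `0` in the direction `x`. -/
def dirDeriv {d : ℕ} (Φ : E d → ℝ) (j : ℕ) (x : E d) : ℝ :=
  iteratedDeriv j (fun t : ℝ => Φ (t • x)) 0

/-- `S_P^m`: tangent directions in which all derivatives of `Φ` at `0`
of orders `2,…,m` vanish. -/
def flagSet {d : ℕ} (Φ : E d → ℝ) (n : E d) (m : ℕ) : Set (E d) :=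
  {x | x ∈ (Submodule.span ℝ {n})ᗮ ∧ ∀ j, 2 ≤ j → j ≤ m → dirDeriv Φ j x = 0}

/-- Data of a smooth boundary point of finite type: a smooth boundary chart
together with the multitype `a = (𝔞₁,…,𝔞_{d-1})` (a monotone tuple of even numbers
` ≥ 2`) and an adapted orthonormal basis `V` of the tangent plane, so that for every
`m ≥ 2` the flag subspace `S_P^m` is spanned by the `V i` with `m < a i`.  (In
particular `dim S_P^m = (d-1) - #{i : 𝔞ᵢ ≤ m}`, which is the defining property of the
multitype, and all entries being finite natural numbers encodes finite type.) -/
structure PointData {d : ℕ} (Ω : Set (E d)) (P : E d) extends BoundaryChart ⊤ Ω P where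
  a : Fin (d - 1) → ℕ
  a_mono : Monotone a
  a_even : ∀ i, Even (a i)
  a_two : ∀ i, 2 ≤ a i
  V : Fin (d - 1) → E d
  V_on : Orthonormal ℝ V
  V_tangent : ∀ i, V i ∈ (Submodule.span ℝ {n})ᗮ
  V_flag : ∀ m, 2 ≤ m →
    Submodule.span ℝ (flagSet Φ n m) = Submodule.span ℝ (V '' {i | m < a i})

/-- `ν_Ω(P) = Σ_{i=1}^{d-1} 𝔞ᵢ⁻¹`. -/
def nuP {d : ℕ} {Ω : Set (E d)} {P : E d} (pd : PointData Ω P) : ℝ :=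
  ∑ i : Fin (d - 1), ((pd.a i : ℝ))⁻¹

/-- `ν_Ω^{(2)}(P) = Σ_{i=2}^{d-1} 𝔞ᵢ⁻¹` (`0` if `d = 2`). -/
def nu2P {d : ℕ} {Ω : Set (E d)} {P : E d} (pd : PointData Ω P) : ℝ :=
  ∑ i ∈ Finset.univ.filter (fun i : Fin (d - 1) => 1 ≤ (i : ℕ)), ((pd.a i : ℝ))⁻¹

/-- `ν_Ω = min_{P ∈ ∂Ω} ν_Ω(P)`. -/
def nuOmega {d : ℕ} {Ω : Set (E d)} (pd : ∀ P ∈ frontier Ω, PointData Ω P) : ℝ :=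
  sInf {v : ℝ | ∃ P, ∃ h : P ∈ frontier Ω, v = nuP (pd P h)}

/-- `μ_Ω = 1/2 + min_{P ∈ ∂Ω} ν_Ω^{(2)}(P)`. -/
def muOmega {d : ℕ} {Ω : Set (E d)} (pd : ∀ P ∈ frontier Ω, PointData Ω P) : ℝ :=
  1 / 2 + sInf {v : ℝ | ∃ P, ∃ h : P ∈ frontier Ω, v = nu2P (pd P h)}

/-- The diagonal image `Ak` of an integer vector `k`. -/
def diagVec {d : ℕ} (a : Fin d → ℝ) (k : Fin d → ℤ) : E d := WithLp.toLp 2 (fun i => a i * (k i : ℝ))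

/-- `dist_∞(ξ, ℝ n)`, the `ℓ^∞` distance from `ξ` to the line `ℝ n`. -/
def distInfLine {d : ℕ} (ξ n : E d) : ℝ := ⨅ c : ℝ, ⨆ i, |ξ i - c * n i|

/-- Insert a `0` at position `j`. -/
def insert0 {n : ℕ} (j : Fin (n + 1)) (z : EuclideanSpace ℝ (Fin n)) : E (n + 1) :=
  WithLp.toLp 2 (fun i => Fin.insertNth (α := fun _ : Fin (n + 1) => ℝ) j (0 : ℝ) (fun l => z l) i)

/-- `Ω_j` regarded as a subset of `ℝ^{d-1}` (delete the `j`-th coordinate). -/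
def sliceLower {n : ℕ} (Ω : Set (E (n + 1))) (j : Fin (n + 1)) :
    Set (EuclideanSpace ℝ (Fin n)) := {z | insert0 j z ∈ Ω}


open Asymptotics Filter Topology

theorem isBigO_pow_pow_of_le {k m : ℕ} (h : k ≤ m) :
    (fun t : ℝ => t ^ m) =O[𝓝 0] fun t => t ^ k :=
  h.eq_or_lt.elim (fun h => h ▸ isBigO_refl _ _) fun h => (isLittleO_pow_pow h).isBigO

theorem eq_zero_of_isLittleO_const_mul_pow {c : ℝ} {k : ℕ}
    (h : (fun t : ℝ => c * t ^ k) =o[𝓝 0] fun t => t ^ k) : c = 0 := by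
  by_contra hc
  refine isLittleO_irrefl ?_ ((isLittleO_const_mul_left_iff hc).mp h)
  have : ∀ᶠ t in 𝓝[≠] (0 : ℝ), t ^ k ≠ 0 :=
    eventually_nhdsWithin_of_forall fun t ht => pow_ne_zero k ht
  exact this.frequently.filter_mono nhdsWithin_le_nhds

theorem taylorWithinEval_univ_zero (f : ℝ → ℝ) (m : ℕ) (t : ℝ) :
    taylorWithinEval f m Set.univ 0 t =
      ∑ k ∈ range (m + 1), (k.factorial : ℝ)⁻¹ * iteratedDeriv k f 0 * t ^ k := by
  rw [taylor_within_apply]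
  refine Finset.sum_congr rfl fun k _ => ?_
  rw [iteratedDerivWithin_univ, smul_eq_mul, sub_zero]
  ring

theorem isLittleO_pow_iff_iteratedDeriv_eq_zero {f : ℝ → ℝ} {m : ℕ} (hf : ContDiff ℝ m f) :
    f =o[𝓝 0] (fun t => t ^ m) ↔ ∀ k ≤ m, iteratedDeriv k f 0 = 0 := by
  constructor
  · intro hfo k
    induction k using Nat.strong_induction_on with
    | _ k ih =>
      intro hk
      have taylor := taylor_isLittleO_univ (x₀ := 0) (hf.of_le (by exact_mod_cast hk))
      have lower : ∀ t : ℝ,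
          ∑ l ∈ range k, (l.factorial : ℝ)⁻¹ * iteratedDeriv l f 0 * t ^ l = 0 :=
        fun t => Finset.sum_eq_zero fun l hl => by
          rw [ih l (mem_range.mp hl) (by grind), mul_zero, zero_mul]
      simp only [sub_zero, taylorWithinEval_univ_zero, Finset.sum_range_succ, lower,
        zero_add] at taylor
      have hcoeff := eq_zero_of_isLittleO_const_mul_pow
        (c := (k.factorial : ℝ)⁻¹ * iteratedDeriv k f 0)
        (((hfo.trans_isBigO (isBigO_pow_pow_of_le hk)).sub taylor).congr_left fun t => by ring)
      simpa [Nat.factorial_ne_zero] using hcoeff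
  · intro hjets
    have taylor := taylor_isLittleO_univ (x₀ := 0) hf
    have vanish : ∀ t : ℝ,
        ∑ k ∈ range (m + 1), (k.factorial : ℝ)⁻¹ * iteratedDeriv k f 0 * t ^ k = 0 :=
      fun t => Finset.sum_eq_zero fun k hk => by
        rw [hjets k (Nat.lt_succ_iff.mp (mem_range.mp hk)), mul_zero, zero_mul]
    simpa only [sub_zero, taylorWithinEval_univ_zero, vanish] using taylor

namespace BoundaryChart

variable {d : ℕ} {k : ℕ∞} {Ω : Set (E d)} {P : E d} (bc : BoundaryChart k Ω P)

theorem hasFDerivAt_Φ_zero (hk : 1 ≤ k) : HasFDerivAt bc.Φ (0 : E d →L[ℝ] ℝ) 0 :=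
  bc.dΦ0 ▸ (bc.smooth.differentiable
    (by exact_mod_cast (zero_lt_one.trans_le hk).ne')).differentiableAt.hasFDerivAt

theorem isLittleO_Φ (hk : 1 ≤ k) : bc.Φ =o[𝓝 0] fun y => y := by
  simpa [bc.Φ0] using hasFDerivAt_iff_isLittleO_nhds_zero.mp (bc.hasFDerivAt_Φ_zero hk)

theorem mem_flagSet_iff (hk : 1 ≤ k) {m : ℕ} (hm : m ≤ k) {x : E d} :
    x ∈ flagSet bc.Φ bc.n m ↔
      x ∈ (ℝ ∙ bc.n)ᗮ ∧ (fun t : ℝ => bc.Φ (t • x)) =o[𝓝 0] fun t => t ^ m := by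
  have hφ : ContDiff ℝ m fun t : ℝ => bc.Φ (t • x) :=
    (bc.smooth.of_le (by exact_mod_cast hm)).comp (contDiff_id.smul contDiff_const)
  have hφ' : HasDerivAt (fun t : ℝ => bc.Φ (t • x)) 0 0 := by
    have hΦ : HasFDerivAt bc.Φ (0 : E d →L[ℝ] ℝ) ((0 : ℝ) • x) := by
      simpa using bc.hasFDerivAt_Φ_zero hk
    have h := hΦ.comp_hasDerivAt (0 : ℝ) (by simpa using (hasDerivAt_id (0 : ℝ)).smul_const x)
    rwa [zero_apply] at h
  rw [isLittleO_pow_iff_iteratedDeriv_eq_zero hφ, flagSet, Set.mem_ofPred_eq]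
  refine and_congr_right fun _ => ⟨fun h l hl => ?_, fun h l _ hl => h l hl⟩
  match l with
  | 0 => simp [bc.Φ0]
  | 1 => simpa using hφ'.deriv
  | l + 2 => exact h (l + 2) (by omega) hl

theorem Φ_starProjection_eq {x : E d} (hx : x ∈ frontier Ω) (hxP : ‖x - P‖ < bc.ε) :
    bc.Φ ((ℝ ∙ bc.n)ᗮ.starProjection (x - P)) = -⟪x - P, bc.n⟫ := by
  obtain ⟨V, hV, rfl⟩ := bc.graph' x hx hxP
  have hn : (ℝ ∙ bc.n)ᗮ.starProjection bc.n = 0 :=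
    (Submodule.starProjection_apply_eq_zero_iff _).mpr
      (Submodule.le_orthogonal_orthogonal _ (Submodule.mem_span_singleton_self _))
  have hVn : ⟪V, bc.n⟫ = 0 := Submodule.mem_orthogonal_singleton_iff_inner_left.mp hV
  have hnn : ⟪bc.n, bc.n⟫ = 1 := by rw [real_inner_self_eq_norm_sq, bc.norm_n, one_pow]
  rw [show P + V - bc.Φ V • bc.n - P = V - bc.Φ V • bc.n by abel, map_sub, map_smul, hn,
    smul_zero, sub_zero, Submodule.starProjection_eq_self_iff.mpr hV, inner_sub_left,
    real_inner_smul_left, hVn, hnn]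
  ring

theorem eventually_Φ_starProjection_eq {α : Type*} {l : Filter α} {s : α → E d}
    (hs : Tendsto s l (𝓝 0)) (hγ : ∀ᶠ t in l, P + s t ∈ frontier Ω) :
    ∀ᶠ t in l, bc.Φ ((ℝ ∙ bc.n)ᗮ.starProjection (s t)) = -⟪s t, bc.n⟫ := by
  filter_upwards [hγ, hs (Metric.ball_mem_nhds 0 bc.εpos)] with t hγt hεt
  have h := bc.Φ_starProjection_eq hγt (by rw [add_sub_cancel_left]; simpa using hεt)
  rwa [add_sub_cancel_left] at h

variable {u : E d} {r : ℝ → E d}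

theorem mem_orthogonal_of_curve (hk : 1 ≤ k) (hr : r =o[𝓝 0] fun t => t)
    (hγ : ∀ᶠ t in 𝓝 0, P + (t • u + r t) ∈ frontier Ω) : u ∈ (ℝ ∙ bc.n)ᗮ := by
  set π := (ℝ ∙ bc.n)ᗮ.starProjection
  have hs : (fun t => t • u + r t) =O[𝓝 0] fun t => t :=
    (IsBigO.of_bound ‖u‖ (Eventually.of_forall fun t => by
      rw [norm_smul, mul_comm])).add hr.isBigO
  have hπs : Tendsto (fun t => π (t • u + r t)) (𝓝 0) (𝓝 0) := by
    have h := (π.continuous.tendsto 0).comp (hs.trans_tendsto tendsto_id)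
    rwa [map_zero] at h
  have hΦo : (fun t => bc.Φ (π (t • u + r t))) =o[𝓝 0] fun t => t :=
    ((bc.isLittleO_Φ hk).comp_tendsto hπs).trans_isBigO ((π.isBigO_comp _ _).trans hs)
  have hrn : (fun t => ⟪r t, bc.n⟫) =o[𝓝 0] fun t => t := by
    refine ((innerSL ℝ bc.n).isBigO_comp r (𝓝 0)).trans_isLittleO hr |>.congr_left fun t => ?_
    rw [innerSL_apply_apply, real_inner_comm]
  rw [Submodule.mem_orthogonal_singleton_iff_inner_left]
  refine eq_zero_of_isLittleO_const_mul_pow (k := 1) ?_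
  simp only [pow_one]
  refine (hΦo.neg_left.sub hrn).congr' ?_ EventuallyEq.rfl
  filter_upwards [bc.eventually_Φ_starProjection_eq (hs.trans_tendsto tendsto_id) hγ] with t ht
  rw [ht, inner_add_left, real_inner_smul_left]
  ring

theorem mem_flagSet_of_curve (hk : 1 ≤ k) {m : ℕ} (hm : 1 ≤ m) (hmk : m ≤ k)
    (hr : r =o[𝓝 0] fun t => t ^ m) (hγ : ∀ᶠ t in 𝓝 0, P + (t • u + r t) ∈ frontier Ω) :
    u ∈ flagSet bc.Φ bc.n m := by
  set π := (ℝ ∙ bc.n)ᗮ.starProjection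
  have hr1 : r =o[𝓝 0] fun t => t := by simpa using hr.trans_isBigO (isBigO_pow_pow_of_le hm)
  have hu := bc.mem_orthogonal_of_curve hk hr1 hγ
  refine (bc.mem_flagSet_iff hk hmk).mpr ⟨hu, ?_⟩
  have hs : Tendsto (fun t : ℝ => t • u + r t) (𝓝 0) (𝓝 0) := by
    simpa using ((tendsto_id (x := 𝓝 (0 : ℝ))).smul_const u).add (hr1.trans_tendsto tendsto_id)
  have hπs : ∀ t, π (t • u + r t) = t • u + π (r t) := fun t => by
    rw [map_add, map_smul, Submodule.starProjection_eq_self_iff.mpr hu]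
  have hπs_tendsto : Tendsto (fun t => π (t • u + r t)) (𝓝 0) (𝓝 0) := by
    have h := (π.continuous.tendsto 0).comp hs
    rwa [map_zero] at h
  have hΦ : HasStrictFDerivAt bc.Φ (0 : E d →L[ℝ] ℝ) 0 :=
    bc.dΦ0 ▸ bc.smooth.contDiffAt.hasStrictFDerivAt
      (by exact_mod_cast (zero_lt_one.trans_le hk).ne')
  have hpair : Tendsto (fun t : ℝ => (t • u, π (t • u + r t))) (𝓝 0) (𝓝 (0, 0)) :=
    Tendsto.prodMk_nhds (by simpa using (tendsto_id (x := 𝓝 (0 : ℝ))).smul_const u) hπs_tendsto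
  have hdiff : (fun t => bc.Φ (t • u) - bc.Φ (π (t • u + r t))) =O[𝓝 0] r := by
    refine (hΦ.isBigO_sub.comp_tendsto hpair).trans ?_
    refine (π.isBigO_comp r _).neg_left.congr_left fun t => ?_
    change -π (r t) = t • u - π (t • u + r t)
    rw [hπs]
    abel
  have hΦπs : (fun t => bc.Φ (π (t • u + r t))) =O[𝓝 0] r := by
    refine ((innerSL ℝ bc.n).isBigO_comp r (𝓝 0)).neg_left.congr' ?_ EventuallyEq.rfl
    filter_upwards [bc.eventually_Φ_starProjection_eq hs hγ] with t ht
    rw [ht, innerSL_apply_apply, inner_add_left, real_inner_smul_left,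
      Submodule.mem_orthogonal_singleton_iff_inner_left.mp hu, mul_zero, zero_add,
      real_inner_comm]
  exact ((hdiff.add hΦπs).trans_isLittleO hr).congr_left fun t => by ring

end BoundaryChart

def insert0LinearIsometry {n : ℕ} (j : Fin (n + 1)) :
    EuclideanSpace ℝ (Fin n) →ₗᵢ[ℝ] E (n + 1) where
  toFun := insert0 j
  map_add' z w := by
    ext i
    refine Fin.succAboveCases j ?_ (fun l => ?_) i <;> simp [insert0]
  map_smul' c z := by
    ext i
    refine Fin.succAboveCases j ?_ (fun l => ?_) i <;> simp [insert0]
  norm_map' z := by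
    simp [EuclideanSpace.norm_eq, Fin.sum_univ_succAbove _ j, insert0]

theorem frontier_sliceLower_subset {n : ℕ} (Ω : Set (E (n + 1))) (j : Fin (n + 1)) :
    frontier (sliceLower Ω j) ⊆ insert0 j ⁻¹' frontier Ω :=
  (insert0LinearIsometry j).continuous.frontier_preimage_subset Ω

theorem insert0_mem_flagSet {n : ℕ} {k : ℕ∞} {Ω : Set (E (n + 1))} {j : Fin (n + 1)}
    {P' : EuclideanSpace ℝ (Fin n)} (bc : BoundaryChart k Ω (insert0 j P'))
    (bc' : BoundaryChart k (sliceLower Ω j) P') (hk : 1 ≤ k) {m : ℕ} (hm : 1 ≤ m)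
    (hmk : m ≤ k) {x : EuclideanSpace ℝ (Fin n)} (hx : x ∈ flagSet bc'.Φ bc'.n m) :
    insert0 j x ∈ flagSet bc.Φ bc.n m := by
  set ι := insert0LinearIsometry j
  obtain ⟨hxT, hψ⟩ := (bc'.mem_flagSet_iff hk hmk).mp hx
  have hsmall : ∀ᶠ t : ℝ in 𝓝 0, ‖t • x‖ < bc'.ε := by
    have h : Tendsto (fun t : ℝ => t • x) (𝓝 0) (𝓝 0) := by
      simpa using (tendsto_id (x := 𝓝 (0 : ℝ))).smul_const x
    filter_upwards [h (Metric.ball_mem_nhds 0 bc'.εpos)] with t ht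
    simpa using ht
  refine bc.mem_flagSet_of_curve hk hm hmk (r := fun t => -(bc'.Φ (t • x) • ι bc'.n)) ?_ ?_
  · refine (isBigO_of_le _ fun t => ?_).trans_isLittleO hψ
    simp [norm_smul, ι.norm_map, bc'.norm_n]
  · filter_upwards [hsmall] with t ht
    have h : ι (P' + t • x - bc'.Φ (t • x) • bc'.n) ∈ frontier Ω :=
      frontier_sliceLower_subset Ω j (bc'.graph (t • x) (Submodule.smul_mem _ t hxT) ht)
    convert h using 1
    change ι P' + (t • ι x + -(bc'.Φ (t • x) • ι bc'.n)) = _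
    rw [map_sub, map_add, map_smul, map_smul]
    abel

theorem finrank_span_flagSet_sliceLower_le {n : ℕ} {k : ℕ∞} {Ω : Set (E (n + 1))}
    {j : Fin (n + 1)} {P' : EuclideanSpace ℝ (Fin n)} (bc : BoundaryChart k Ω (insert0 j P'))
    (bc' : BoundaryChart k (sliceLower Ω j) P') (hk : 1 ≤ k) {m : ℕ} (hm : 1 ≤ m)
    (hmk : m ≤ k) :
    Module.finrank ℝ (Submodule.span ℝ (flagSet bc'.Φ bc'.n m)) ≤
      Module.finrank ℝ (Submodule.span ℝ (flagSet bc.Φ bc.n m)) := by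
  have hmaps : Submodule.span ℝ (flagSet bc'.Φ bc'.n m) ≤
      (Submodule.span ℝ (flagSet bc.Φ bc.n m)).comap (insert0LinearIsometry j).toLinearMap :=
    Submodule.span_le.mpr fun x hx =>
      Submodule.subset_span (insert0_mem_flagSet bc bc' hk hm hmk hx)
  exact LinearMap.finrank_le_finrank_of_injective
    (f := (insert0LinearIsometry j).toLinearMap.restrict fun x hx => hmaps hx)
    fun x y hxy => Subtype.ext ((insert0LinearIsometry j).injective (congrArg Subtype.val hxy))

theorem PointData.finrank_span_flagSet {d : ℕ} {Ω : Set (E d)} {P : E d} (pd : PointData Ω P)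
    {m : ℕ} (hm : 2 ≤ m) :
    Module.finrank ℝ (Submodule.span ℝ (flagSet pd.Φ pd.n m)) = #{i | m < pd.a i} := by
  have hli : LinearIndependent ℝ fun i : {i // m < pd.a i} => pd.V i :=
    pd.V_on.linearIndependent.comp _ Subtype.val_injective
  rw [pd.V_flag m hm, Set.image_eq_range, ← Fintype.card_subtype]
  exact finrank_span_eq_card hli

theorem Monotone.sub_le_card_filter_lt {N m : ℕ} {a : Fin N → ℕ} (ha : Monotone a) {i : Fin N}
    (hi : m < a i) : N - i ≤ #{l | m < a l} := by
  rw [← Fin.card_Ici]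
  exact card_le_card fun l hl => mem_filter.mpr ⟨mem_univ l, hi.trans_le (ha (mem_Ici.mp hl))⟩

theorem Monotone.card_filter_lt_le_sub {N m : ℕ} {a : Fin N → ℕ} (ha : Monotone a) {i : Fin N}
    (hi : a i ≤ m) : #{l | m < a l} ≤ N - 1 - i := by
  rw [← Fin.card_Ioi]
  refine card_le_card fun l hl => mem_Ioi.mpr (lt_of_not_ge fun hli => ?_)
  exact (mem_filter.mp hl).2.not_ge ((ha hli).trans hi)

/-- Comparison of the multitypes of `∂Ω_j` and `∂Ω` at a common
boundary point: `ã_i ≤ 𝔞_{i+1}` (here the ambient dimension is `d = n + 1 ≥ 3`). -/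
theorem statement_11 {n : ℕ}
    {Ω : Set (E (n + 1))}
    (j : Fin (n + 1)) {P : E (n + 1)} (hPj : P j = 0)
    (pdP : PointData Ω P)
    {P' : EuclideanSpace ℝ (Fin n)} (hP' : P' = fun i => P (j.succAbove i))
    (pdP' : PointData (sliceLower Ω j) P') :
    ∀ i : Fin (n - 1), pdP'.a i ≤ pdP.a ⟨(i : ℕ) + 1, by have := i.isLt; omega⟩ := by
  intro i
  by_contra! hlt
  set m := pdP.a ⟨(i : ℕ) + 1, by have := i.isLt; omega⟩
  have hm : 2 ≤ m := pdP.a_two _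
  have hP : insert0 j P' = P := by
    ext l
    refine Fin.succAboveCases j ?_ (fun l => ?_) l <;> simp [insert0, hP', hPj]
  subst hP
  have hrank := finrank_span_flagSet_sliceLower_le (m := m) pdP.toBoundaryChart
    pdP'.toBoundaryChart le_top (by omega) le_top
  rw [pdP.finrank_span_flagSet hm, pdP'.finrank_span_flagSet hm] at hrank
  have hlower := Monotone.sub_le_card_filter_lt pdP'.a_mono hlt
  have hupper := Monotone.card_filter_lt_le_sub pdP.a_mono (le_refl m)
  have := i.isLt
  simp only at hupper
  omega

end Paper
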